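/- Let G be a group with finite generating set S and Cayley graph Γ. Let g ∈ G and s ∈ S ∪ S⁻¹ with |sg| = |g| + 1, and let h be a vertex of C(sg) and k ∈ G with k not a vertex of C(sg) and {h,k} an edge of Γ. Then {h,k} is a tangent edge (i.e. an edge of the extended cone C̄(sg)) if and only if exactly one of the following holds: (Case 1) {h,k} is a tangent edge of C̄(g) with k not a vertex of C(g); or (Case 2) {hg⁻¹, kg⁻¹} is a tangent edge of C̄(s) with kg⁻¹ not a vertex of C(s), but k is a vertex of C(g). -/

import Mathlib

/-!
Right multiplication is an automorphism of the Cayley graph and `d(a, b) = |b a⁻¹|`. When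
`|s g| = |g| + |s|`, a vertex `h` lies on a geodesic from `1` through `s g` exactly when it lies on
one through `g` and `h g⁻¹` lies on one through `s`; that is, `C(s g) = C(g) ∩ C(s) g`. Hence,
for an edge `{h, k}` leaving `C(s g)`, either `k ∉ C(g)`, and the edge leaves `C(g)` as well, or
`k ∈ C(g)`, and then `|h| = |k|` iff `|h g⁻¹| = |k g⁻¹|`, while `k g⁻¹ ∉ C(s)`.
-/

variable {G : Type*} [Group G]

noncomputable def wordLength (S : Set G) (g : G) : ℕ :=
  sInf {n | ∃ w : List G, (∀ x ∈ w, x ∈ S ∪ S⁻¹) ∧ w.length = n ∧ w.prod = g}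

def cayley (S : Set G) : SimpleGraph G where
  Adj g h := g ≠ h ∧ h * g⁻¹ ∈ S ∪ S⁻¹
  symm := ⟨by
    rintro g h ⟨hne, hmem⟩
    refine ⟨hne.symm, ?_⟩
    have key : g * h⁻¹ = (h * g⁻¹)⁻¹ := by group
    rw [key]
    rcases hmem with h1 | h1
    · exact Or.inr (by simpa [Set.mem_inv] using h1)
    · exact Or.inl (by simpa [Set.mem_inv] using h1)⟩
  loopless := ⟨fun g h => h.1 rfl⟩

def coneSet (S : Set G) (g : G) : Set G :=
  {h | wordLength S h = wordLength S g + (cayley S).dist g h}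

lemma self_mem_coneSet (S : Set G) (g : G) : g ∈ coneSet S g := by
  simp [coneSet]

/-- The cone `C(g)` as a subgraph of the Cayley graph. -/
def coneSubgraph (S : Set G) (g : G) : (cayley S).Subgraph where
  verts := coneSet S g
  Adj a b := a ∈ coneSet S g ∧ b ∈ coneSet S g ∧ (cayley S).Adj a b
  adj_sub h := h.2.2
  edge_vert h := h.1
  symm := ⟨by rintro a b ⟨ha, hb, hab⟩; exact ⟨hb, ha, hab.symm⟩⟩

/-- The extended cone `C̄(g)` as a subgraph of the Cayley graph: the cone together with,
for each vertex `h` of the cone and each tangent edge `{h,k}` of the Cayley graph,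
the vertex `k` and the edge `{h,k}`. -/
def extConeSubgraph (S : Set G) (g : G) : (cayley S).Subgraph where
  verts := coneSet S g ∪
    {k | ∃ h ∈ coneSet S g, (cayley S).Adj h k ∧ wordLength S h = wordLength S k}
  Adj a b := (cayley S).Adj a b ∧
    ((a ∈ coneSet S g ∧ b ∈ coneSet S g) ∨
      (wordLength S a = wordLength S b ∧ (a ∈ coneSet S g ∨ b ∈ coneSet S g)))
  adj_sub h := h.1
  edge_vert := by
    rintro a b ⟨hadj, hc | ⟨ht, hc⟩⟩
    · exact Or.inl hc.1
    · rcases hc with hc | hc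
      · exact Or.inl hc
      · exact Or.inr ⟨b, hc, hadj.symm, ht.symm⟩
  symm := ⟨by
    rintro a b ⟨hadj, hc | ⟨ht, hc⟩⟩
    · exact ⟨hadj.symm, Or.inl ⟨hc.2, hc.1⟩⟩
    · exact ⟨hadj.symm, Or.inr ⟨ht.symm, hc.symm⟩⟩⟩

lemma self_mem_extCone (S : Set G) (g : G) : g ∈ (extConeSubgraph S g).verts :=
  Set.mem_union_left _ (self_mem_coneSet S g)

lemma exists_word_prod_eq (S : Set G) (hgen : Subgroup.closure S = ⊤) (g : G) :
    ∃ w : List G, (∀ x ∈ w, x ∈ S ∪ S⁻¹) ∧ w.length = wordLength S g ∧ w.prod = g := by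
  have hg : g ∈ Submonoid.closure (S ∪ S⁻¹) := by
    rw [← Subgroup.closure_toSubmonoid, hgen]; trivial
  obtain ⟨w, hw, hp⟩ := Submonoid.exists_list_of_mem_closure hg
  exact Nat.sInf_mem (show ∃ n, n ∈ {n | ∃ w : List G, (∀ x ∈ w, x ∈ S ∪ S⁻¹) ∧ w.length = n ∧
    w.prod = g} from ⟨_, w, hw, rfl, hp⟩)

lemma wordLength_prod_le_length {S : Set G} {w : List G} (hw : ∀ x ∈ w, x ∈ S ∪ S⁻¹) :
    wordLength S w.prod ≤ w.length :=
  Nat.sInf_le ⟨w, hw, rfl, rfl⟩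

lemma wordLength_le_one {S : Set G} {s : G} (hs : s ∈ S ∪ S⁻¹) : wordLength S s ≤ 1 := by
  simpa using wordLength_prod_le_length (w := [s]) (by simpa using hs)

lemma wordLength_mul_le (S : Set G) (hgen : Subgroup.closure S = ⊤) (a b : G) :
    wordLength S (a * b) ≤ wordLength S a + wordLength S b := by
  obtain ⟨u, hu, hlu, rfl⟩ := exists_word_prod_eq S hgen a
  obtain ⟨v, hv, hlv, rfl⟩ := exists_word_prod_eq S hgen b
  calc wordLength S (u.prod * v.prod) = wordLength S (u ++ v).prod := by rw [List.prod_append]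
    _ ≤ (u ++ v).length :=
      wordLength_prod_le_length fun x hx => (List.mem_append.mp hx).elim (hu x) (hv x)
    _ = _ := by rw [List.length_append, hlu, hlv]

lemma cayley_adj_iff {S : Set G} {a b : G} :
    (cayley S).Adj a b ↔ a ≠ b ∧ b * a⁻¹ ∈ S ∪ S⁻¹ :=
  Iff.rfl

lemma cayley_adj_mul_right {S : Set G} {a b : G} (c : G) :
    (cayley S).Adj (a * c) (b * c) ↔ (cayley S).Adj a b := by
  rw [cayley_adj_iff, cayley_adj_iff, (mul_left_injective c).ne_iff,
    show b * c * (a * c)⁻¹ = b * a⁻¹ by group]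

lemma exists_walk_length_le (S : Set G) {w : List G} (hw : ∀ x ∈ w, x ∈ S ∪ S⁻¹) (g : G) :
    ∃ p : (cayley S).Walk g (w.prod * g), p.length ≤ w.length := by
  induction w with
  | nil => exact ⟨SimpleGraph.Walk.nil.copy rfl (one_mul g).symm, by simp⟩
  | cons x t ih =>
    obtain ⟨p, hp⟩ := ih fun y hy => hw y (List.mem_cons_of_mem _ hy)
    rw [List.prod_cons, mul_assoc]
    by_cases hx : x = 1
    · subst hx
      exact ⟨p.copy rfl (one_mul _).symm, by simp; omega⟩
    · have hadj : (cayley S).Adj (t.prod * g) (x * (t.prod * g)) := by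
        refine cayley_adj_iff.mpr ⟨fun e => hx ?_, ?_⟩
        · simpa using e
        · rw [mul_inv_cancel_right]; exact hw x List.mem_cons_self
      exact ⟨p.concat hadj, by simp; omega⟩

lemma exists_word_of_walk {S : Set G} {g h : G} (p : (cayley S).Walk g h) :
    ∃ w : List G, (∀ x ∈ w, x ∈ S ∪ S⁻¹) ∧ w.length = p.length ∧ w.prod = h * g⁻¹ := by
  induction p with
  | nil => exact ⟨[], by simp, rfl, by simp⟩
  | @cons u v _ huv _ ih =>
    obtain ⟨w, hw, hlen, hprod⟩ := ih
    refine ⟨w ++ [v * u⁻¹], ?_, by simp [hlen], ?_⟩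
    · intro x hx
      rcases List.mem_append.mp hx with hx | hx
      · exact hw x hx
      · rw [List.mem_singleton.mp hx]; exact (cayley_adj_iff.mp huv).2
    · rw [List.prod_append, hprod, List.prod_singleton]; group

lemma cayley_dist_eq (S : Set G) (hgen : Subgroup.closure S = ⊤) (g h : G) :
    (cayley S).dist g h = wordLength S (h * g⁻¹) := by
  obtain ⟨w, hw, hlen, hprod⟩ := exists_word_prod_eq S hgen (h * g⁻¹)
  obtain ⟨p, hp⟩ := exists_walk_length_le S hw g
  have hp' : w.prod * g = h := by rw [hprod, inv_mul_cancel_right]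
  obtain ⟨q, hq⟩ := SimpleGraph.Reachable.exists_walk_length_eq_dist ⟨p.copy rfl hp'⟩
  obtain ⟨v, hv, hvlen, hvprod⟩ := exists_word_of_walk q
  apply le_antisymm
  · calc (cayley S).dist g h ≤ (p.copy rfl hp').length := SimpleGraph.dist_le _
      _ ≤ wordLength S (h * g⁻¹) := by rw [SimpleGraph.Walk.length_copy, ← hlen]; exact hp
  · calc wordLength S (h * g⁻¹) ≤ v.length := hvprod ▸ wordLength_prod_le_length hv
      _ = (cayley S).dist g h := by rw [hvlen, hq]

lemma mem_coneSet_iff (S : Set G) (hgen : Subgroup.closure S = ⊤) {a b : G} :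
    a ∈ coneSet S b ↔ wordLength S a = wordLength S b + wordLength S (a * b⁻¹) := by
  rw [coneSet, Set.mem_ofPred_eq, cayley_dist_eq S hgen]

lemma mem_coneSet_mul_iff (S : Set G) (hgen : Subgroup.closure S = ⊤) {g s : G}
    (hsg : wordLength S (s * g) = wordLength S g + wordLength S s) (h : G) :
    h ∈ coneSet S (s * g) ↔ h ∈ coneSet S g ∧ h * g⁻¹ ∈ coneSet S s := by
  have tri_g := wordLength_mul_le S hgen (h * g⁻¹) g
  have tri_s := wordLength_mul_le S hgen (h * g⁻¹ * s⁻¹) s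
  rw [inv_mul_cancel_right] at tri_g tri_s
  simp only [mem_coneSet_iff S hgen, hsg, show h * (s * g)⁻¹ = h * g⁻¹ * s⁻¹ by group]
  constructor
  · intro; constructor <;> omega
  · rintro ⟨_, _⟩; omega

lemma extConeSubgraph_adj_of_mem_coneSet {S : Set G} {g a b : G} (ha : a ∈ coneSet S g)
    (hab : (cayley S).Adj a b) (hlen : wordLength S a = wordLength S b) :
    (extConeSubgraph S g).Adj a b :=
  ⟨hab, Or.inr ⟨hlen, Or.inl ha⟩⟩

theorem tangent_edge_characterization_general (S : Set G)
    (hgen : Subgroup.closure S = ⊤)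
    (g s : G) (hs : s ∈ S ∪ S⁻¹) (hlen : wordLength S (s * g) = wordLength S g + 1)
    (h k : G) (hh : h ∈ coneSet S (s * g)) (hk : k ∉ coneSet S (s * g))
    (hadj : (cayley S).Adj h k) :
    wordLength S h = wordLength S k ↔
      Xor'
        ((extConeSubgraph S g).Adj h k ∧ wordLength S h = wordLength S k ∧
          k ∉ coneSet S g)
        ((extConeSubgraph S s).Adj (h * g⁻¹) (k * g⁻¹) ∧
          wordLength S (h * g⁻¹) = wordLength S (k * g⁻¹) ∧
          k * g⁻¹ ∉ coneSet S s ∧ k ∈ coneSet S g) := by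
  have hs_one : wordLength S s = 1 := by
    have := wordLength_mul_le S hgen s g
    have := wordLength_le_one hs
    omega
  have hcone := mem_coneSet_mul_iff S hgen (by rw [hlen, hs_one])
  obtain ⟨hhg, hhs⟩ := (hcone h).mp hh
  have hlen_h := (mem_coneSet_iff S hgen).mp hhg
  constructor
  · intro htan
    by_cases hkg : k ∈ coneSet S g
    · have hlen_k := (mem_coneSet_iff S hgen).mp hkg
      have htan' : wordLength S (h * g⁻¹) = wordLength S (k * g⁻¹) := by omega
      have hks : k * g⁻¹ ∉ coneSet S s := fun hks => hk ((hcone k).mpr ⟨hkg, hks⟩)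
      exact Or.inr ⟨⟨extConeSubgraph_adj_of_mem_coneSet hhs ((cayley_adj_mul_right _).mpr hadj)
        htan', htan', hks, hkg⟩, fun case1 => case1.2.2 hkg⟩
    · exact Or.inl ⟨⟨extConeSubgraph_adj_of_mem_coneSet hhg hadj htan, htan, hkg⟩,
        fun case2 => hkg case2.2.2.2⟩
  · rintro (⟨⟨-, htan, -⟩, -⟩ | ⟨⟨-, htan', -, hkg⟩, -⟩)
    · exact htan
    · have := (mem_coneSet_iff S hgen).mp hkg
      omega

/-- Characterization of the tangent edges attached to the cone `C(sg)`:
for `h ∈ C(sg)`, `k ∉ C(sg)` with `{h,k}` an edge of the Cayley graph, the edge `{h,k}` is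
tangent (i.e. it is an edge of the extended cone `C̄(sg)`) iff exactly one of the two cases
holds: (1) `{h,k}` is a tangent edge of `C̄(g)` with `k ∉ C(g)`, or (2) `{hg⁻¹,kg⁻¹}` is a
tangent edge of `C̄(s)` with `kg⁻¹ ∉ C(s)` but `k ∈ C(g)`. -/
theorem tangent_edge_characterization (S : Set G) (hS : S.Finite)
    (hgen : Subgroup.closure S = ⊤)
    (g s : G) (hs : s ∈ S ∪ S⁻¹) (hlen : wordLength S (s * g) = wordLength S g + 1)
    (h k : G) (hh : h ∈ coneSet S (s * g)) (hk : k ∉ coneSet S (s * g))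
    (hadj : (cayley S).Adj h k) :
    wordLength S h = wordLength S k ↔
      Xor'
        ((extConeSubgraph S g).Adj h k ∧ wordLength S h = wordLength S k ∧
          k ∉ coneSet S g)
        ((extConeSubgraph S s).Adj (h * g⁻¹) (k * g⁻¹) ∧
          wordLength S (h * g⁻¹) = wordLength S (k * g⁻¹) ∧
          k * g⁻¹ ∉ coneSet S s ∧ k ∈ coneSet S g) :=
  tangent_edge_characterization_general S hgen g s hs hlen h k hh hk hadj
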